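/- arXiv:2005.02234 — 6 statements merged into one kernel-verified Lean document; each statement's English description precedes it below -/
import Mathlib

section
/- Let $a>0$, $b\in\mathbb{R}$ satisfy $a\ge 2b\ge 0$ or $a\ge -nb\ge 0$. Let $v_1,\ldots,v_n\in\mathbb{R}^n$ satisfy $\langle v_k,v_\ell\rangle = a$ if $k=\ell$ and $=b$ if $k\ne\ell$. Then for every integer vector $\beta\in\mathbb{Z}^n\setminus\{0\}$, the lattice vector $w=\sum_{k=1}^n \beta_k v_k$ satisfies $\|w\|^2\ge a$. In particular, the first successive minimum of the Euclidean unit ball with respect to the lattice generated by $v_1,\ldots,v_n$ equals $\sqrt{a}$. -/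
open scoped RealInnerProductSpace

private lemma int_S_pos {n : ℕ} (β : Fin n → ℤ) (hβ : β ≠ 0) :
    1 ≤ ∑ k, (β k) ^ 2 := by
  obtain ⟨j, hj⟩ : ∃ j, β j ≠ 0 := Function.ne_iff.mp hβ
  have h1 : 1 ≤ (β j) ^ 2 := by
    have := Int.one_le_abs hj
    nlinarith [sq_abs (β j)]
  calc (1 : ℤ) ≤ (β j) ^ 2 := h1
    _ ≤ ∑ k, (β k) ^ 2 :=
      Finset.single_le_sum (fun i _ => sq_nonneg (β i)) (Finset.mem_univ j)

private lemma int_two_le {n : ℕ} (β : Fin n → ℤ) (hβ : β ≠ 0) :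
    2 ≤ (∑ k, (β k) ^ 2) + (∑ k, β k) ^ 2 := by
  set S := ∑ k, (β k) ^ 2 with hS
  set T := ∑ k, β k with hT
  have hS1 : 1 ≤ S := int_S_pos β hβ
  rcases le_or_gt 2 S with h | h
  · nlinarith [sq_nonneg T]
  · -- S = 1, so T is odd
    have hSeq : S = 1 := by omega
    have heven : Even (S - T) := by
      rw [hS, hT, ← Finset.sum_sub_distrib]
      refine Finset.even_sum _ fun i _ => ?_
      have : β i ^ 2 - β i = β i * (β i - 1) := by ring
      rw [this]
      rcases Int.even_or_odd (β i) with he | ho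
      · exact he.mul_right _
      · have he1 : Even (β i - 1) := by
          rcases ho with ⟨m, hm⟩; exact ⟨m, by omega⟩
        exact he1.mul_left _
    have hTodd : Odd T := by
      rcases Int.even_or_odd T with he | ho
      · exfalso
        rcases heven with ⟨c, hc⟩
        rcases he with ⟨d, hd⟩
        omega
      · exact ho
    have hT0 : T ≠ 0 := by
      intro h0; rw [h0] at hTodd; exact (Int.not_even_iff_odd.mpr hTodd) Even.zero
    have : 1 ≤ T ^ 2 := by
      have := Int.one_le_abs hT0
      nlinarith [sq_abs T]
    omega

private lemma int_key {n : ℕ} (β : Fin n → ℤ) (hβ : β ≠ 0) :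
    (∑ k, β k) ^ 2 + n ≤ (n + 1) * ∑ k, (β k) ^ 2 := by
  set S := ∑ k, (β k) ^ 2 with hS
  set T := ∑ k, β k with hT
  have hS1 : 1 ≤ S := int_S_pos β hβ
  have hCS : T ^ 2 ≤ n * S := by
    have := sq_sum_le_card_mul_sum_sq (s := (Finset.univ : Finset (Fin n))) (f := β)
    simpa [hS, hT] using this
  have habs : T ^ 2 ≤ S ^ 2 := by
    have h1 : |T| ≤ S := by
      calc |T| ≤ ∑ k, |β k| := Finset.abs_sum_le_sum_abs _ _
        _ ≤ ∑ k, (β k) ^ 2 := Finset.sum_le_sum fun i _ => by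
            rcases eq_or_ne (β i) 0 with h | h
            · simp [h]
            · have := Int.one_le_abs h
              nlinarith [sq_abs (β i)]
    calc T ^ 2 = |T| ^ 2 := (sq_abs T).symm
      _ ≤ S ^ 2 := by nlinarith [abs_nonneg T]
  rcases le_or_gt (n : ℤ) S with h | h
  · nlinarith
  · nlinarith

private lemma norm_sq_eq {n : ℕ} (a b : ℝ) (v : Fin n → EuclideanSpace ℝ (Fin n))
    (hv : ∀ k ℓ, ⟪v k, v ℓ⟫ = if k = ℓ then a else b) (c : Fin n → ℝ) :
    ‖∑ k, c k • v k‖ ^ 2 = (a - b) * (∑ k, c k ^ 2) + b * (∑ k, c k) ^ 2 := by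
  have h1 : ‖∑ k, c k • v k‖ ^ 2 = ⟪∑ k, c k • v k, ∑ k, c k • v k⟫ :=
    (real_inner_self_eq_norm_sq _).symm
  rw [h1, sum_inner]
  have h2 : ∀ k, ⟪c k • v k, ∑ ℓ, c ℓ • v ℓ⟫
      = b * (c k * ∑ ℓ, c ℓ) + (a - b) * c k ^ 2 := by
    intro k
    rw [inner_sum]
    have h3 : ∀ ℓ, ⟪c k • v k, c ℓ • v ℓ⟫ = c k * c ℓ * (if k = ℓ then a else b) := by
      intro ℓ
      rw [real_inner_smul_left, real_inner_smul_right, hv]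
      ring
    rw [Finset.sum_congr rfl fun ℓ _ => h3 ℓ]
    have h4 : ∀ ℓ : Fin n, c k * c ℓ * (if k = ℓ then a else b)
        = b * (c k * c ℓ) + (if ℓ = k then (a - b) * c k ^ 2 else 0) := by
      intro ℓ
      rcases eq_or_ne k ℓ with h | h
      · subst h; simp; ring
      · simp [h, Ne.symm h]; ring
    rw [Finset.sum_congr rfl fun ℓ _ => h4 ℓ, Finset.sum_add_distrib,
      Finset.sum_ite_eq' Finset.univ k fun _ => (a - b) * c k ^ 2, ← Finset.mul_sum]
    simp
    exact Or.inl (Finset.mul_sum _ _ _).symm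
  rw [Finset.sum_congr rfl fun k _ => h2 k, Finset.sum_add_distrib, ← Finset.mul_sum,
    ← Finset.mul_sum, ← Finset.sum_mul]
  ring

theorem stmt_3 (n : ℕ) (hn : 1 ≤ n) (a b : ℝ) (ha : 0 < a)
    (hcond : (2 * b ≤ a ∧ 0 ≤ b) ∨ (-(n : ℝ) * b ≤ a ∧ 0 ≤ -(n : ℝ) * b))
    (v : Fin n → EuclideanSpace ℝ (Fin n))
    (hv : ∀ k ℓ, ⟪v k, v ℓ⟫ = if k = ℓ then a else b) :
    (∀ β : Fin n → ℤ, β ≠ 0 → a ≤ ‖∑ k, (β k : ℝ) • v k‖ ^ 2) ∧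
      IsLeast {r : ℝ | ∃ w ∈ Submodule.span ℤ (Set.range v), w ≠ 0 ∧ ‖w‖ = r}
        (Real.sqrt a) := by
  have main : ∀ β : Fin n → ℤ, β ≠ 0 → a ≤ ‖∑ k, (β k : ℝ) • v k‖ ^ 2 := by
    intro β hβ
    rw [norm_sq_eq a b v hv]
    set S : ℤ := ∑ k, (β k) ^ 2 with hSdef
    set T : ℤ := ∑ k, β k with hTdef
    have hScast : (∑ k, ((β k : ℝ)) ^ 2) = (S : ℝ) := by push_cast [hSdef]; rfl
    have hTcast : (∑ k, ((β k : ℝ))) = (T : ℝ) := by push_cast [hTdef]; rfl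
    rw [hScast, hTcast]
    have hS1 : (1 : ℝ) ≤ (S : ℝ) := by exact_mod_cast int_S_pos β hβ
    rcases hcond with ⟨h2b, hb⟩ | ⟨hnb, hb⟩
    · have h2 : (2 : ℝ) ≤ (S : ℝ) + (T : ℝ) ^ 2 := by exact_mod_cast int_two_le β hβ
      nlinarith
    · have hkey : (T : ℝ) ^ 2 + (n : ℝ) ≤ ((n : ℝ) + 1) * (S : ℝ) := by
        exact_mod_cast int_key β hβ
      have hn1 : (1 : ℝ) ≤ (n : ℝ) := by exact_mod_cast hn
      have hb0 : b ≤ 0 := by nlinarith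
      have h1 : 0 ≤ (a + (n : ℝ) * b) * ((S : ℝ) - 1) :=
        mul_nonneg (by linarith) (by linarith)
      have h2 : 0 ≤ (-b) * (((n : ℝ) + 1) * (S : ℝ) - (T : ℝ) ^ 2 - (n : ℝ)) :=
        mul_nonneg (by linarith) (by linarith)
      nlinarith [h1, h2]
  refine ⟨main, ?_, ?_⟩
  · -- √a is attained by v ⟨0, hn⟩
    refine ⟨v ⟨0, hn⟩, Submodule.subset_span ⟨⟨0, hn⟩, rfl⟩, ?_, ?_⟩
    · intro h0
      have h1 : ⟪v ⟨0, hn⟩, v ⟨0, hn⟩⟫ = a := by rw [hv]; simp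
      rw [h0, inner_zero_left] at h1
      linarith
    · have h1 : ‖v ⟨0, hn⟩‖ ^ 2 = a := by
        have h0 : ⟪v ⟨0, hn⟩, v ⟨0, hn⟩⟫ = a := by rw [hv]; simp
        rw [← real_inner_self_eq_norm_sq, h0]
      rw [← h1, Real.sqrt_sq (norm_nonneg _)]
  · rintro r ⟨w, hw, hw0, rfl⟩
    obtain ⟨c, hc⟩ := (Finsupp.mem_span_range_iff_exists_finsupp).mp hw
    have hc' : ∑ k, (c k : ℝ) • v k = w := by
      rw [← hc, Finsupp.sum_fintype]
      · simp [← Int.cast_smul_eq_zsmul ℝ]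
      · intro i; simp
    have hcne : (c : Fin n → ℤ) ≠ 0 := by
      intro h0
      apply hw0
      rw [← hc']
      have : ∀ k, ((c : Fin n → ℤ) k : ℝ) = 0 := fun k => by
        rw [congrFun h0 k]; simp
      simp [this]
    have := main c hcne
    rw [hc'] at this
    calc Real.sqrt a ≤ Real.sqrt (‖w‖ ^ 2) := Real.sqrt_le_sqrt this
      _ = ‖w‖ := by rw [Real.sqrt_sq (norm_nonneg _)]
end

section
/- Let $v_1,\ldots,v_n\in\mathbb{R}^n$ be an $(a,b)$-equiangular basis with $a+b(j-1)\ne 0$ for some $1\le j\le n-1$, and set $\eta_j=\frac{b}{a+b(j-1)}$. Then for every $k$ with $j+1\le k\le n$, the vector $w_k := v_k - \eta_j(v_1+\cdots+v_j)$ is orthogonal to each of $v_1,\ldots,v_j$, i.e., $w_k$ is the orthogonal projection of $v_k$ onto the orthogonal complement of $\mathrm{span}\{v_1,\ldots,v_j\}$. Moreover, $\|w_k\|^2 = \frac{(a-b)(a+bj)}{a+b(j-1)}$ and for $k\ne\ell$ (both $>j$), $\langle w_k,w_\ell\rangle = \frac{(a-b)b}{a+b(j-1)}$. -/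
open scoped RealInnerProductSpace

theorem stmt_5 (n : ℕ) (a b : ℝ) (j : ℕ) (hj1 : 1 ≤ j) (hjn : j ≤ n - 1)
    (v : Fin n → EuclideanSpace ℝ (Fin n))
    (hv : ∀ k ℓ, ⟪v k, v ℓ⟫ = if k = ℓ then a else b)
    (hden : a + b * ((j : ℝ) - 1) ≠ 0) (η : ℝ) (hη : η = b / (a + b * ((j : ℝ) - 1)))
    (w : Fin n → EuclideanSpace ℝ (Fin n))
    (hw : ∀ k, w k = v k - η • ∑ i ∈ Finset.univ.filter (fun i : Fin n => (i : ℕ) < j), v i) :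
    ∀ k : Fin n, j ≤ (k : ℕ) →
      (∀ i : Fin n, (i : ℕ) < j → ⟪w k, v i⟫ = 0) ∧
      ‖w k‖ ^ 2 = (a - b) * (a + b * j) / (a + b * ((j : ℝ) - 1)) ∧
      (∀ ℓ : Fin n, j ≤ (ℓ : ℕ) → k ≠ ℓ →
        ⟪w k, w ℓ⟫ = (a - b) * b / (a + b * ((j : ℝ) - 1))) := by
  have hjn' : j < n := by omega
  set F := Finset.univ.filter (fun i : Fin n => (i : ℕ) < j) with hF
  have hcard : F.card = j := by
    have : F = Finset.Iio ⟨j, hjn'⟩ := by ext i; simp [hF, Fin.lt_def]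
    rw [this, Fin.card_Iio]
  -- sum of inner products of basis vectors against a fixed vector
  have hsum : ∀ x : Fin n, (∑ i ∈ F, ⟪v i, v x⟫) =
      b * j + (if (x : ℕ) < j then a - b else 0) := by
    intro x
    have : ∀ i ∈ F, ⟪v i, v x⟫ = b + (if i = x then a - b else 0) := by
      intro i _
      rw [hv]
      by_cases h : i = x <;> simp [h]
    rw [Finset.sum_congr rfl this, Finset.sum_add_distrib, Finset.sum_const,
      Finset.sum_ite_eq' F x (fun _ => a - b), hcard]
    have hx : x ∈ F ↔ (x : ℕ) < j := by simp [hF]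
    by_cases h : (x : ℕ) < j <;> simp [hx, h, nsmul_eq_mul, mul_comm]
  -- inner product of w k with any basis vector
  have key : ∀ (k x : Fin n), ⟪w k, v x⟫ =
      (if k = x then a else b) - η * (b * j + (if (x : ℕ) < j then a - b else 0)) := by
    intro k x
    rw [hw, inner_sub_left, real_inner_smul_left, sum_inner, hsum, hv]
  have korth : ∀ (k x : Fin n), j ≤ (k : ℕ) → (x : ℕ) < j → ⟪w k, v x⟫ = 0 := by
    intro k x hk hx
    have hkx : k ≠ x := by intro h; rw [h] at hk; omega
    rw [key, if_neg hkx, if_pos hx, hη]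
    field_simp
    ring
  intro k hk
  refine ⟨fun i hi => korth k i hk hi, ?_, ?_⟩
  · have : ‖w k‖ ^ 2 = ⟪w k, w k⟫ := (real_inner_self_eq_norm_sq _).symm
    rw [this]
    nth_rewrite 2 [hw]
    rw [inner_sub_right, real_inner_smul_right, inner_sum]
    have hz : (∑ i ∈ F, ⟪w k, v i⟫) = 0 := by
      apply Finset.sum_eq_zero
      intro i hi
      exact korth k i hk (by simpa [hF] using hi)
    rw [hz, key, if_pos rfl, if_neg (by omega), hη]
    field_simp
    ring
  · intro ℓ hℓ hkℓ
    nth_rewrite 2 [hw]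
    rw [inner_sub_right, real_inner_smul_right, inner_sum]
    have hz : (∑ i ∈ F, ⟪w k, v i⟫) = 0 := by
      apply Finset.sum_eq_zero
      intro i hi
      exact korth k i hk (by simpa [hF] using hi)
    rw [hz, key, if_neg hkℓ, if_neg (by omega), hη]
    field_simp
    ring
end

section
/- Let $K\subset\mathbb{R}^n$ be a convex body, $\Lambda$ a full-rank lattice, $L$ a $k$-dimensional linear subspace spanned by lattice vectors, and $t\in\mathbb{R}^n$. Let $\lambda_1$ denote the first minimum of $(K-K)\cap L$ with respect to $\Lambda\cap L$, i.e., the least $\lambda>0$ with $\lambda((K-K)\cap L)\cap\Lambda\ne\{0\}$. Then the number of lattice points in $K\cap(t+L)$ is at most $\lfloor 1/\lambda_1 + 1\rfloor^k$. -/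
open Pointwise

theorem stmt_11 (n k : ℕ) (K : Set (EuclideanSpace ℝ (Fin n)))
    (hK : Convex ℝ K) (hKc : IsCompact K) (hKi : (interior K).Nonempty)
    (B : Module.Basis (Fin n) ℝ (EuclideanSpace ℝ (Fin n)))
    (Λ : Set (EuclideanSpace ℝ (Fin n)))
    (hΛ : Λ = (Submodule.span ℤ (Set.range B) : Submodule ℤ (EuclideanSpace ℝ (Fin n))))
    (L : Submodule ℝ (EuclideanSpace ℝ (Fin n)))
    (hLk : Module.finrank ℝ L = k)
    (hLlat : ∃ S : Set (EuclideanSpace ℝ (Fin n)), S ⊆ Λ ∧ L = Submodule.span ℝ S)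
    (t : EuclideanSpace ℝ (Fin n))
    (lam₁ : ℝ) (hlam₀ : 0 < lam₁)
    (hlam : IsLeast {lam : ℝ | 0 < lam ∧
      ∃ w ∈ Λ, w ≠ 0 ∧ w ∈ lam • ((K - K) ∩ (L : Set (EuclideanSpace ℝ (Fin n))))} lam₁) :
    ((K ∩ {x | x - t ∈ L} ∩ Λ).ncard : ℤ) ≤ ⌊1 / lam₁ + 1⌋ ^ k := by
  classical
    -- basic facts about m := ⌊1/λ₁ + 1⌋
  have hinvpos : (0:ℝ) < 1 / lam₁ := by positivity
  have hfloor1 : (1:ℤ) ≤ ⌊1 / lam₁ + 1⌋ := by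
    rw [Int.le_floor]; push_cast; linarith
  obtain ⟨m, hmZ⟩ : ∃ m : ℕ, (m : ℤ) = ⌊1 / lam₁ + 1⌋ :=
    ⟨_, Int.toNat_of_nonneg (by linarith)⟩
  have hm1 : 1 ≤ m := by omega
  have hmRpos : (0:ℝ) < (m:ℝ) := by exact_mod_cast Nat.cast_pos.mpr (by omega)
  have hmR : (1 / lam₁ : ℝ) < (m:ℝ) := by
    have h := Int.sub_one_lt_floor (1 / lam₁ + 1)
    have h2 : ((m:ℤ) : ℝ) = ((⌊1 / lam₁ + 1⌋ : ℤ) : ℝ) := by rw [hmZ]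
    push_cast at h2 ⊢
    linarith
  have hinv : (1:ℝ) / (m:ℝ) < lam₁ := by
    rw [div_lt_iff₀ hmRpos]
    calc (1:ℝ) = lam₁ * (1 / lam₁) := by field_simp
    _ < lam₁ * m := by exact mul_lt_mul_of_pos_left hmR hlam₀
  set S : Set (EuclideanSpace ℝ (Fin n)) := K ∩ {x | x - t ∈ L} ∩ Λ with hSdef
  rcases Set.eq_empty_or_nonempty S with hS | ⟨x₀, hx₀⟩
  · rw [hS, Set.ncard_empty]
    positivity
  -- the lattice M' = Λ ∩ L, viewed inside L
  set N : Submodule ℤ (EuclideanSpace ℝ (Fin n)) := Submodule.span ℤ (Set.range B) with hNdef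
  set M : Submodule ℤ (EuclideanSpace ℝ (Fin n)) := N ⊓ L.restrictScalars ℤ with hMdef2
  set M' : Submodule ℤ L := M.comap ((L.subtype).restrictScalars ℤ) with hM'def
  haveI hMd : DiscreteTopology M :=
    DiscreteTopology.of_subset (inferInstance : DiscreteTopology N)
      (fun x hx => hx.1 : (M : Set (EuclideanSpace ℝ (Fin n))) ⊆ (N : Set (EuclideanSpace ℝ (Fin n))))
  haveI : DiscreteTopology M' := by
    refine DiscreteTopology.preimage_of_continuous_injective (M : Set (EuclideanSpace ℝ (Fin n))) ?_
      (Submodule.injective_subtype L)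
    exact LinearMap.continuous_of_finiteDimensional L.subtype
  obtain ⟨S₀, hS₀Λ, hS₀span⟩ := hLlat
  have hS₀M : S₀ ⊆ (M : Set (EuclideanSpace ℝ (Fin n))) := by
    intro s hs
    refine ⟨?_, ?_⟩
    · have := hS₀Λ hs; rw [hΛ] at this; exact this
    · show s ∈ L.restrictScalars ℤ
      rw [Submodule.restrictScalars_mem, hS₀span]
      exact Submodule.subset_span hs
  have himg : L.subtype '' (M' : Set L) = (M : Set (EuclideanSpace ℝ (Fin n))) := by
    ext x
    constructor
    · rintro ⟨y, hy, rfl⟩; exact hy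
    · intro hx; exact ⟨⟨x, hx.2⟩, hx, rfl⟩
  have hspanM : Submodule.span ℝ (M : Set (EuclideanSpace ℝ (Fin n))) = L := by
    apply le_antisymm
    · rw [Submodule.span_le]; exact fun x hx => hx.2
    · conv_lhs => rw [hS₀span]
      exact Submodule.span_mono hS₀M
  haveI : IsZLattice ℝ M' := ⟨by
    apply Submodule.map_injective_of_injective (Submodule.injective_subtype L)
    rw [Submodule.map_span, Submodule.map_top, Submodule.range_subtype, himg, hspanM]⟩
  haveI : Module.Finite ℤ M' := ZLattice.module_finite ℝ M'
  haveI : Module.Free ℤ M' := ZLattice.module_free ℝ M'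
  have hrank : Module.finrank ℤ M' = k := by rw [ZLattice.rank ℝ M', hLk]
  let b : Module.Basis (Fin k) ℤ M' := Module.finBasisOfFinrankEq ℤ M' hrank
  -- differences of points of S lie in M
  have hdiff : ∀ x ∈ S, ∀ y ∈ S, (x - y ∈ L ∧ x - y ∈ M) := by
    rintro x ⟨⟨hxK, hxL⟩, hxΛ⟩ y ⟨⟨hyK, hyL⟩, hyΛ⟩
    have hLmem : x - y ∈ L := by
      have := L.sub_mem hxL hyL
      simpa [sub_sub_sub_cancel_right] using this
    refine ⟨hLmem, ?_, ?_⟩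
    · rw [hΛ] at hxΛ hyΛ
      exact N.sub_mem hxΛ hyΛ
    · show x - y ∈ L.restrictScalars ℤ
      rwa [Submodule.restrictScalars_mem]
  -- the reduction map mod m
  let e : S → M' := fun x =>
    ⟨⟨(x : EuclideanSpace ℝ (Fin n)) - x₀, (hdiff x x.2 x₀ hx₀).1⟩, (hdiff x x.2 x₀ hx₀).2⟩
  let g : S → (Fin k → ZMod m) := fun x i => ((b.repr (e x)) i : ZMod m)
  have hginj : Function.Injective g := by
    intro x y hxy
    by_contra hne
    have hxyE : (x : EuclideanSpace ℝ (Fin n)) ≠ (y : EuclideanSpace ℝ (Fin n)) := fun h => hne (Subtype.ext h)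
    set d : M' := e x - e y with hd
    have hdE : (((d : L) : EuclideanSpace ℝ (Fin n))) = (x : EuclideanSpace ℝ (Fin n)) - (y : EuclideanSpace ℝ (Fin n)) := by
      simp only [hd, e, AddSubgroupClass.coe_sub]
      abel
    have hdvd : ∀ i, (m : ℤ) ∣ (b.repr d) i := by
      intro i
      have h1 : ((b.repr (e x) i : ℤ) : ZMod m) = ((b.repr (e y) i : ℤ) : ZMod m) :=
        congrFun hxy i
      rw [ZMod.intCast_eq_intCast_iff] at h1
      have h2 := (Int.ModEq.dvd h1)
      rw [hd, map_sub, Finsupp.sub_apply]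
      exact (dvd_sub_comm.mp h2)
    choose c hc using hdvd
    set u : M' := ∑ i, c i • b i with hu
    have hrepru : ∀ i, b.repr u i = c i := by
      intro i; rw [hu, Module.Basis.repr_sum_self]
    have hmu : (m : ℤ) • u = d := by
      apply b.repr.injective
      ext i
      rw [map_smul, Finsupp.smul_apply, hrepru, hc i, smul_eq_mul]
    set uE : EuclideanSpace ℝ (Fin n) := ((u : L) : EuclideanSpace ℝ (Fin n)) with huE
    have hmuE : (m : ℝ) • uE = (x : EuclideanSpace ℝ (Fin n)) - (y : EuclideanSpace ℝ (Fin n)) := by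
      rw [← hdE, ← hmu]
      push_cast
      rw [← Int.cast_smul_eq_zsmul ℝ]
      push_cast
      rfl
    have huE0 : uE ≠ 0 := by
      intro h0
      rw [h0, smul_zero] at hmuE
      exact hxyE (sub_eq_zero.mp hmuE.symm)
    have huEΛ : uE ∈ Λ := by
      rw [hΛ]
      exact (u.2.1 : uE ∈ N)
    have hxyKK : (x : EuclideanSpace ℝ (Fin n)) - (y : EuclideanSpace ℝ (Fin n)) ∈ (K - K) ∩ (L : Set (EuclideanSpace ℝ (Fin n))) := by
      refine ⟨Set.sub_mem_sub x.2.1.1 ((Set.mem_of_mem_inter_left y.2) : _).1, ?_⟩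
      exact (hdiff x x.2 y y.2).1
    have huEmem : uE ∈ (1 / (m:ℝ)) • ((K - K) ∩ (L : Set (EuclideanSpace ℝ (Fin n)))) := by
      have : uE = (1 / (m:ℝ)) • ((x : EuclideanSpace ℝ (Fin n)) - (y : EuclideanSpace ℝ (Fin n))) := by
        rw [← hmuE, smul_smul, one_div, inv_mul_cancel₀ (ne_of_gt hmRpos), one_smul]
      rw [this]
      exact Set.smul_mem_smul_set hxyKK
    have hle : lam₁ ≤ 1 / (m:ℝ) :=
      hlam.2 ⟨by positivity, uE, huEΛ, huE0, huEmem⟩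
    linarith
  haveI : NeZero m := ⟨by omega⟩
  have hcard : Nat.card (Fin k → ZMod m) = m ^ k := by
    rw [Nat.card_eq_fintype_card, Fintype.card_fun, ZMod.card, Fintype.card_fin]
  have hSle : S.ncard ≤ m ^ k := by
    rw [← Nat.card_coe_set_eq, ← hcard]
    exact Nat.card_le_card_of_injective g hginj
  calc ((S.ncard : ℤ)) ≤ ((m ^ k : ℕ) : ℤ) := by exact_mod_cast hSle
    _ = (m : ℤ) ^ k := by push_cast; ring
    _ = ⌊1 / lam₁ + 1⌋ ^ k := by rw [hmZ]
end

section
/- Let $K\subset\mathbb{R}^n$ be a convex body, $\Lambda$ a full-rank lattice, and let $v_1,\ldots,v_n$ be linearly independent vectors of the polar lattice $\Lambda^\star$ with $v_i\in\lambda_i^\star (K-K)^\star$, where $\lambda_i^\star=\lambda_i((K-K)^\star,\Lambda^\star)$. Then $\#(K\cap\Lambda)\le\prod_{i=1}^n\lfloor \lambda_i^\star+1\rfloor$. -/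
open Pointwise
open scoped RealInnerProductSpace

/-- The polar body of a set `S`. -/
def polarSet (n : ℕ) (S : Set (EuclideanSpace ℝ (Fin n))) :
    Set (EuclideanSpace ℝ (Fin n)) :=
  {y | ∀ x ∈ S, ⟪x, y⟫ ≤ (1 : ℝ)}

/-- The polar lattice of a set `Λ`. -/
def polarLattice (n : ℕ) (Λ : Set (EuclideanSpace ℝ (Fin n))) :
    Set (EuclideanSpace ℝ (Fin n)) :=
  {a | ∀ b ∈ Λ, ∃ m : ℤ, ⟪b, a⟫ = (m : ℝ)}

/-- The `i`-th successive minimum of the (origin-symmetric) body `M`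
with respect to the point set `Γ`: the infimum of all `lam > 0` such that
`lam • M` contains `i` linearly independent points of `Γ`. -/
noncomputable def succMin (n : ℕ) (M Γ : Set (EuclideanSpace ℝ (Fin n))) (i : ℕ) : ℝ :=
  sInf {lam : ℝ | 0 < lam ∧ ∃ T : Finset (EuclideanSpace ℝ (Fin n)),
    (T : Set (EuclideanSpace ℝ (Fin n))) ⊆ Γ ∩ lam • M ∧
    LinearIndependent ℝ (fun x : T => (x : EuclideanSpace ℝ (Fin n))) ∧ T.card = i}

theorem stmt_12 (n : ℕ) (K : Set (EuclideanSpace ℝ (Fin n)))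
    (hK : Convex ℝ K) (hKc : IsCompact K) (hKi : (interior K).Nonempty)
    (B : Module.Basis (Fin n) ℝ (EuclideanSpace ℝ (Fin n)))
    (Λ : Set (EuclideanSpace ℝ (Fin n)))
    (hΛ : Λ = (Submodule.span ℤ (Set.range B) : Submodule ℤ (EuclideanSpace ℝ (Fin n))))
    (lamstar : Fin n → ℝ)
    (hlam : ∀ i : Fin n, lamstar i =
      succMin n (polarSet n (K - K)) (polarLattice n Λ) ((i : ℕ) + 1))
    (v : Fin n → EuclideanSpace ℝ (Fin n))
    (hvind : LinearIndependent ℝ v)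
    (hvpolar : ∀ i, v i ∈ polarLattice n Λ)
    (hvin : ∀ i, v i ∈ lamstar i • polarSet n (K - K)) :
    ((K ∩ Λ).ncard : ℤ) ≤ ∏ i, ⌊lamstar i + 1⌋ := by
  classical
  -- lamstar is nonnegative
  have hlam0 : ∀ i, 0 ≤ lamstar i := by
    intro i
    rw [hlam i]
    apply Real.sInf_nonneg
    rintro x ⟨hx, -⟩
    exact hx.le
  have hfloor1 : ∀ i, (1 : ℤ) ≤ ⌊lamstar i⌋ + 1 := by
    intro i
    have := Int.floor_nonneg.mpr (hlam0 i)
    omega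
  rcases (K ∩ Λ).eq_empty_or_nonempty with hE | ⟨a₀, ha₀⟩
  · rw [hE]
    simp only [Set.ncard_empty, Nat.cast_zero]
    apply Finset.prod_nonneg
    intro i _
    rw [Int.floor_add_one]
    linarith [hfloor1 i]
  -- the integer coordinates
  set f : EuclideanSpace ℝ (Fin n) → Fin n → ℤ := fun a i => ⌊⟪a, v i⟫⌋ with hf
  have hfeq : ∀ a ∈ Λ, ∀ i, ((f a i : ℝ)) = ⟪a, v i⟫ := by
    intro a ha i
    obtain ⟨m, hm⟩ := hvpolar i a ha
    rw [hf]
    dsimp only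
    rw [hm, Int.floor_intCast]
  -- the key bound
  have hbound : ∀ a ∈ K, ∀ b ∈ K, ∀ i, ⟪a - b, v i⟫ ≤ lamstar i := by
    intro a ha b hb i
    obtain ⟨w, hw, hvw⟩ := hvin i
    rw [← hvw, real_inner_smul_right]
    have h1 : ⟪a - b, w⟫ ≤ 1 := hw _ (Set.sub_mem_sub ha hb)
    calc lamstar i * ⟪a - b, w⟫ ≤ lamstar i * 1 :=
          mul_le_mul_of_nonneg_left h1 (hlam0 i)
      _ = lamstar i := mul_one _
  -- integer difference bound
  have hd : ∀ a ∈ K ∩ Λ, ∀ b ∈ K ∩ Λ, ∀ i, f a i - f b i ≤ ⌊lamstar i⌋ := by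
    intro a ha b hb i
    rw [Int.le_floor]
    push_cast
    rw [hfeq a ha.2 i, hfeq b hb.2 i, ← inner_sub_left]
    exact hbound a ha.1 b hb.1 i
  -- minimal value of each coordinate
  have hc : ∀ i : Fin n, ∃ c : ℤ, ∀ a ∈ K ∩ Λ, c ≤ f a i ∧ f a i ≤ c + ⌊lamstar i⌋ := by
    intro i
    obtain ⟨lb, ⟨a, ha, hfa⟩, hlb⟩ :=
      Int.exists_least_of_bdd (P := fun z => ∃ a ∈ K ∩ Λ, f a i = z)
        ⟨f a₀ i - ⌊lamstar i⌋, by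
          rintro z ⟨b, hb, rfl⟩
          have := hd a₀ ha₀ b hb i
          omega⟩
        ⟨f a₀ i, a₀, ha₀, rfl⟩
    refine ⟨lb, fun b hb => ⟨hlb _ ⟨b, hb, rfl⟩, ?_⟩⟩
    have := hd b hb a ha i
    omega
  choose c hcmin using hc
  -- injectivity on K ∩ Λ
  have hinj : Set.InjOn f (K ∩ Λ) := by
    intro a ha b hb hab
    have hx : ∀ i, ⟪a - b, v i⟫ = 0 := by
      intro i
      have h1 := hfeq a ha.2 i
      have h2 := hfeq b hb.2 i
      have h3 : f a i = f b i := congrFun hab i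
      rw [inner_sub_left, ← h1, ← h2, h3, sub_self]
    have hspan : Submodule.span ℝ (Set.range v) = ⊤ := by
      apply Submodule.eq_top_of_finrank_eq
      rw [finrank_span_eq_card hvind]
      simp [finrank_euclideanSpace_fin]
    have hzero : ⟪a - b, a - b⟫ = 0 := by
      have hmem : a - b ∈ Submodule.span ℝ (Set.range v) := by
        rw [hspan]; exact Submodule.mem_top
      refine Submodule.span_induction (p := fun x _ => ⟪x, a - b⟫ = 0)
        ?_ ?_ ?_ ?_ hmem
      · rintro x ⟨i, rfl⟩
        rw [real_inner_comm]; exact hx i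
      · exact inner_zero_left _
      · intro x y _ _ hx' hy'
        rw [inner_add_left, hx', hy', add_zero]
      · intro r x _ hx'
        rw [real_inner_smul_left, hx', mul_zero]
    have : a - b = 0 := by
      rwa [inner_self_eq_zero] at hzero
    exact sub_eq_zero.mp this
  -- count via the box
  set T : Finset (Fin n → ℤ) :=
    Fintype.piFinset fun i => Finset.Icc (c i) (c i + ⌊lamstar i⌋) with hT
  have himg : f '' (K ∩ Λ) ⊆ ↑T := by
    rintro _ ⟨a, ha, rfl⟩
    simp only [hT, Finset.coe_sort_coe, Fintype.mem_piFinset, Finset.mem_Icc,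
      Finset.mem_coe]
    intro i
    exact hcmin i a ha
  have h1 : (K ∩ Λ).ncard = (f '' (K ∩ Λ)).ncard :=
    (Set.ncard_image_of_injOn hinj).symm
  have h2 : (f '' (K ∩ Λ)).ncard ≤ T.card := by
    rw [← Set.ncard_coe_finset]
    exact Set.ncard_le_ncard himg T.finite_toSet
  have h3 : T.card = ∏ i, (⌊lamstar i⌋ + 1).toNat := by
    rw [hT, Fintype.card_piFinset]
    apply Finset.prod_congr rfl
    intro i _
    rw [Int.card_Icc]
    omega
  have h4 : ((K ∩ Λ).ncard : ℤ) ≤ ((∏ i, (⌊lamstar i⌋ + 1).toNat : ℕ) : ℤ) := by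
    exact_mod_cast h1 ▸ h3 ▸ h2
  refine h4.trans (le_of_eq ?_)
  push_cast
  apply Finset.prod_congr rfl
  intro i _
  rw [Int.toNat_of_nonneg (by linarith [hfloor1 i]), Int.floor_add_one]
end

section
/- Let $K\subset\mathbb{R}^n$ be a convex body and $\Lambda$ a full-rank lattice with $\lambda_1:=\lambda_1(K-K,\Lambda)>0$. Then $\#(K\cap\Lambda)\le\lfloor 1/\lambda_1+1\rfloor^n$. -/
open Pointwise

theorem stmt_15 (n : ℕ) (K : Set (EuclideanSpace ℝ (Fin n)))
    (hK : Convex ℝ K) (hKc : IsCompact K) (hKi : (interior K).Nonempty)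
    (B : Module.Basis (Fin n) ℝ (EuclideanSpace ℝ (Fin n)))
    (Λ : Set (EuclideanSpace ℝ (Fin n)))
    (hΛ : Λ = (Submodule.span ℤ (Set.range B) : Submodule ℤ (EuclideanSpace ℝ (Fin n))))
    (lam₁ : ℝ) (hlam₀ : 0 < lam₁)
    (hlam : IsLeast {lam : ℝ | 0 < lam ∧ ∃ w ∈ Λ, w ≠ 0 ∧ w ∈ lam • (K - K)} lam₁) :
    ((K ∩ Λ).ncard : ℤ) ≤ ⌊1 / lam₁ + 1⌋ ^ n := by
  have hinv : 0 < 1 / lam₁ := by positivity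
  set M : ℤ := ⌊1 / lam₁ + 1⌋ with hMdef
  have hMgt : 1 / lam₁ < (M : ℝ) := by
    have := Int.sub_one_lt_floor (1 / lam₁ + 1)
    simp only [← hMdef] at this
    linarith
  have hM1 : 1 ≤ M := by
    rw [hMdef]
    exact Int.le_floor.mpr (by push_cast; linarith)
  set m : ℕ := M.toNat with hmdef
  have hmM : (m : ℤ) = M := Int.toNat_of_nonneg (by linarith)
  have hmpos : 0 < m := by omega
  haveI : NeZero m := ⟨by omega⟩
  have hmR : (1:ℝ) / lam₁ < (m : ℝ) := by
    rw [show ((m:ℝ)) = ((m:ℤ):ℝ) by push_cast; ring, hmM]; exact hMgt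
  -- the reduction map
  classical
  have hmem : ∀ x ∈ Λ, ∀ i, ∃ z : ℤ, (z : ℝ) = B.repr x i := by
    intro x hx i
    rw [hΛ] at hx
    obtain ⟨z, hz⟩ := (B.mem_span_iff_repr_mem ℤ x).mp hx i
    exact ⟨z, hz⟩
  set f : (K ∩ Λ : Set _) → (Fin n → ZMod m) :=
    fun x i => ((⌊B.repr x.1 i⌋ : ℤ) : ZMod m) with hfdef
  have hf : Function.Injective f := by
    intro x y hxy
    by_contra hne
    have hxy1 : x.1 ≠ y.1 := fun h => hne (Subtype.ext h)
    -- coordinates are integers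
    have hxK : x.1 ∈ K := x.2.1
    have hyK : y.1 ∈ K := y.2.1
    have hxΛ := x.2.2
    have hyΛ := y.2.2
    have hdvd : ∀ i, ∃ k : ℤ, B.repr x.1 i - B.repr y.1 i = (m : ℝ) * (k : ℝ) := by
      intro i
      obtain ⟨a, ha⟩ := hmem x.1 hxΛ i
      obtain ⟨b, hb⟩ := hmem y.1 hyΛ i
      have hfa : ⌊B.repr x.1 i⌋ = a := by rw [← ha]; exact Int.floor_intCast a
      have hfb : ⌊B.repr y.1 i⌋ = b := by rw [← hb]; exact Int.floor_intCast b
      have hab : ((a : ZMod m)) = ((b : ZMod m)) := by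
        have h := congrFun hxy i
        simpa only [hfdef, hfa, hfb] using h
      have hdv : (m : ℤ) ∣ a - b :=
        Int.ModEq.dvd ((ZMod.intCast_eq_intCast_iff a b m).mp hab).symm
      obtain ⟨k, hk⟩ := hdv
      refine ⟨k, ?_⟩
      rw [← ha, ← hb]
      have : ((a - b : ℤ) : ℝ) = (((m : ℤ) * k : ℤ) : ℝ) := by exact_mod_cast congrArg (Int.cast : ℤ → ℝ) hk
      push_cast at this
      push_cast
      linarith
    choose k hk using hdvd
    set z : EuclideanSpace ℝ (Fin n) := ((m : ℝ))⁻¹ • (x.1 - y.1) with hzdef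
    have hzrep : ∀ i, B.repr z i = (k i : ℝ) := by
      intro i
      rw [hzdef, map_smul, map_sub]
      have hm0 : (m : ℝ) ≠ 0 := by positivity
      simp only [Finsupp.coe_smul, Finsupp.coe_sub, Pi.smul_apply, Pi.sub_apply, smul_eq_mul]
      rw [hk i]
      field_simp
    have hzΛ : z ∈ Λ := by
      rw [hΛ]
      refine SetLike.mem_coe.mpr ((B.mem_span_iff_repr_mem ℤ z).mpr fun i => ⟨k i, ?_⟩)
      rw [hzrep i]; rfl
    have hz0 : z ≠ 0 := by
      rw [hzdef]
      intro h
      have hm0 : ((m : ℝ))⁻¹ ≠ 0 := by positivity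
      have := smul_eq_zero.mp h
      rcases this with h | h
      · exact hm0 h
      · exact hxy1 (sub_eq_zero.mp h)
    have hzmem : z ∈ ((m:ℝ))⁻¹ • (K - K) :=
      Set.smul_mem_smul_set (Set.sub_mem_sub hxK hyK)
    have hle : lam₁ ≤ ((m:ℝ))⁻¹ := hlam.2 ⟨by positivity, z, hzΛ, hz0, hzmem⟩
    have : ((m:ℝ))⁻¹ < lam₁ := by
      rw [inv_lt_iff_one_lt_mul₀ (by positivity)]
      have e : (1/lam₁) * lam₁ = 1 := by field_simp
      nlinarith [mul_lt_mul_of_pos_right hmR hlam₀]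
    linarith
  have hfin : (K ∩ Λ).Finite := Set.finite_coe_iff.mp (Finite.of_injective f hf)
  have hcard : (K ∩ Λ).ncard ≤ m ^ n := by
    have h1 : Nat.card (K ∩ Λ : Set _) ≤ Nat.card (Fin n → ZMod m) :=
      Nat.card_le_card_of_injective f hf
    have h2 : Nat.card (Fin n → ZMod m) = m ^ n := by
      simp [Nat.card_eq_fintype_card, ZMod.card]
    calc (K ∩ Λ).ncard = Nat.card (K ∩ Λ : Set _) := (Nat.card_coe_set_eq _).symm
      _ ≤ Nat.card (Fin n → ZMod m) := h1
      _ = m ^ n := h2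
  calc ((K ∩ Λ).ncard : ℤ) ≤ ((m ^ n : ℕ) : ℤ) := by exact_mod_cast hcard
    _ = M ^ n := by push_cast [hmM]; ring
end

section
/- Let $\gamma_1\ge 0$, $\gamma_2\ge 1$, $w\in[0,1)$, and $\lambda_1\in(0,\tfrac12]$. Then $\sum_{i=1}^{\lfloor\gamma_2\rfloor}\Big(\frac{1}{\lambda_1}\cdot\frac{\gamma_2-i}{\gamma_2-w}-1\Big) + \sum_{j=0}^{\lfloor\gamma_1\rfloor}\Big(\frac{1}{\lambda_1}\cdot\frac{\gamma_1-j}{\gamma_1+w}-1\Big) \ge \Big(\frac{1}{2\lambda_1}-1\Big)\lfloor\gamma_1+\gamma_2\rfloor - \frac{1}{\lambda_1}$. -/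
lemma sum_aux (c γ d : ℝ) (m : ℕ) :
    ∑ i ∈ Finset.Icc (1:ℤ) (m:ℤ), (c * ((γ - i)/d) - 1)
      = c * (((m:ℝ)*γ - m*(m+1)/2)/d) - m := by
  induction m with
  | zero => simp
  | succ n ih =>
      have hset : Finset.Icc (1:ℤ) ((n:ℤ)+1) = insert ((n:ℤ)+1) (Finset.Icc 1 (n:ℤ)) := by
        ext x; simp only [Finset.mem_Icc, Finset.mem_insert]; omega
      rw [show ((n+1:ℕ):ℤ) = (n:ℤ)+1 by push_cast; ring, hset,
        Finset.sum_insert (by simp only [Finset.mem_Icc]; omega), ih]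
      push_cast
      by_cases hd : d = 0
      · simp [hd]
      · field_simp
        ring

lemma sum_aux0 (c γ d : ℝ) (m : ℕ) :
    ∑ j ∈ Finset.Icc (0:ℤ) (m:ℤ), (c * ((γ - j)/d) - 1)
      = c * ((((m:ℝ)+1)*γ - m*(m+1)/2)/d) - (m+1) := by
  induction m with
  | zero => simp
  | succ n ih =>
      have hset : Finset.Icc (0:ℤ) ((n:ℤ)+1) = insert ((n:ℤ)+1) (Finset.Icc 0 (n:ℤ)) := by
        ext x; simp only [Finset.mem_Icc, Finset.mem_insert]; omega
      rw [show ((n+1:ℕ):ℤ) = (n:ℤ)+1 by push_cast; ring, hset,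
        Finset.sum_insert (by simp only [Finset.mem_Icc]; omega), ih]
      push_cast
      by_cases hd : d = 0
      · simp [hd]
      · field_simp
        ring

theorem stmt_18 (γ₁ γ₂ w lam₁ : ℝ) (hγ₁ : 0 ≤ γ₁) (hγ₂ : 1 ≤ γ₂)
    (hw0 : 0 ≤ w) (hw1 : w < 1) (hlam0 : 0 < lam₁) (hlam : lam₁ ≤ 1 / 2) :
    (1 / (2 * lam₁) - 1) * (⌊γ₁ + γ₂⌋ : ℝ) - 1 / lam₁ ≤
      (∑ i ∈ Finset.Icc (1 : ℤ) ⌊γ₂⌋, (1 / lam₁ * ((γ₂ - i) / (γ₂ - w)) - 1)) +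
        ∑ j ∈ Finset.Icc (0 : ℤ) ⌊γ₁⌋, (1 / lam₁ * ((γ₁ - j) / (γ₁ + w)) - 1) := by
  set a : ℝ := (⌊γ₂⌋ : ℝ) with ha
  set b : ℝ := (⌊γ₁⌋ : ℝ) with hb
  have hm2 : (0:ℤ) ≤ ⌊γ₂⌋ := by positivity
  have hm1 : (0:ℤ) ≤ ⌊γ₁⌋ := Int.floor_nonneg.mpr hγ₁
  have hm2' : (1:ℤ) ≤ ⌊γ₂⌋ := Int.le_floor.mpr (by push_cast; exact hγ₂)
  have ha1 : (1:ℝ) ≤ a := by rw [ha]; exact_mod_cast hm2'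
  have haγ : a ≤ γ₂ := Int.floor_le γ₂
  have hb0 : (0:ℝ) ≤ b := by rw [hb]; exact_mod_cast hm1
  have hbγ : b ≤ γ₁ := Int.floor_le γ₁
  obtain ⟨k2, hk2⟩ := Int.eq_ofNat_of_zero_le hm2
  obtain ⟨k1, hk1⟩ := Int.eq_ofNat_of_zero_le hm1
  have ea : a = (k2:ℝ) := by rw [ha, hk2]; push_cast; ring
  have eb : b = (k1:ℝ) := by rw [hb, hk1]; push_cast; ring
  rw [hk2, hk1, sum_aux, sum_aux0, ← ea, ← eb]
  have hd2 : 0 < γ₂ - w := by linarith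
  -- bound 1: second fraction
  have h1 : b/2 ≤ ((b+1)*γ₁ - b*(b+1)/2)/(γ₁+w) := by
    rcases eq_or_lt_of_le (by linarith : (0:ℝ) ≤ γ₁ + w) with h | h
    · have hγ0 : γ₁ = 0 := by linarith [hw0]
      have hb' : b = 0 := by
        have : b ≤ 0 := by rw [hγ0] at hbγ; exact hbγ
        linarith
      simp [hb', ← h]
    · rw [le_div_iff₀ h]
      nlinarith
  -- bound 2: first fraction
  have h2 : (a-1)/2 ≤ (a*γ₂ - a*(a+1)/2)/(γ₂-w) := by
    rw [le_div_iff₀ hd2]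
    nlinarith
  have hF : ((⌊γ₁ + γ₂⌋ : ℤ) : ℝ) ≤ a + b + 1 := by
    have h1 : γ₁ + γ₂ < (⌊γ₁⌋ + 1) + (⌊γ₂⌋ + 1) := by
      push_cast
      have := Int.lt_floor_add_one γ₁
      have := Int.lt_floor_add_one γ₂
      linarith
    have h2 : (⌊γ₁ + γ₂⌋ : ℤ) ≤ ⌊γ₁⌋ + ⌊γ₂⌋ + 1 := by
      have := Int.floor_lt.mpr (by push_cast; linarith [Int.lt_floor_add_one γ₁, Int.lt_floor_add_one γ₂] : γ₁ + γ₂ < ((⌊γ₁⌋ + ⌊γ₂⌋ + 2 : ℤ) : ℝ))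
      omega
    calc ((⌊γ₁ + γ₂⌋ : ℤ) : ℝ) ≤ ((⌊γ₁⌋ + ⌊γ₂⌋ + 1 : ℤ) : ℝ) := by exact_mod_cast h2
      _ = a + b + 1 := by push_cast; ring
  have hu : (2:ℝ) ≤ 1/lam₁ := by
    rw [le_div_iff₀ hlam0]; linarith
  have hu0 : (0:ℝ) ≤ 1/lam₁ := by positivity
  have hhalf : 1/(2*lam₁) = (1/lam₁)/2 := by ring
  rw [hhalf]
  have e1 := mul_le_mul_of_nonneg_left h1 hu0
  have e2 := mul_le_mul_of_nonneg_left h2 hu0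
  nlinarith [mul_le_mul_of_nonneg_left (sub_nonneg.mpr hF) (by linarith : (0:ℝ) ≤ (1/lam₁)/2 - 1)]
end
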